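/- Let k ≥ 2, n = 3k+1, and let I = I(P_n) be the edge ideal of the path P_n in S = K[x_1,…,x_n] over a field K. Let P = {a ∈ N^n : x^a ∉ I and x^a divides x_1x_2⋯x_n} be the characteristic poset of S/I, let α = Σ_{i=1}^{k−2} e_{3i−1} ∈ N^n, and let P_{k+2,α} = {a ∈ P : |a| = k+2 and x^α divides x^a}. Then P_{k+2,α} = {α + e_{3k−5} + e_{3k−3} + e_{3k−1} + e_{3k+1}}; moreover A = Σ_{i=1}^{k−1} e_{3i−1} belongs to P and |A| = k−1. -/

import Mathlib

/-! An element `a` of the characteristic poset is the same as an independent set of the path,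
read as a 0/1 sequence on `ℕ` with no two consecutive ones. If moreover `x^α ∣ x^a`, then in every
block `{3i, 3i+1, 3i+2}` with `i < k - 2` the middle vertex is forced and its two neighbours are
excluded, so these blocks carry exactly `k - 2` ones. The remaining four ones sit among the last
seven vertices `3k-6, …, 3k`, and a path on `2r + 1` vertices has a unique independent set of size
`r + 1`: the alternating one. -/

open MvPolynomial

/-- The edge ideal `I(P_m)` of the path `P_m` on vertices `x_1, …, x_m`
(0-indexed as `X 0, …, X (m-1)`), regarded as an ideal of `S = K[x_1, …, x_n]`:
it is generated by the monomials `X i * X (i+1)` for `i + 2 ≤ m`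
(1-indexed: `x_i x_{i+1}` for `1 ≤ i ≤ m - 1`). -/
noncomputable def pathIdeal (K : Type*) [Field K] (n m : ℕ) :
    Ideal (MvPolynomial (Fin n) K) :=
  Ideal.span {p | ∃ i j : Fin n, (j : ℕ) = (i : ℕ) + 1 ∧ (i : ℕ) + 2 ≤ m ∧ p = X i * X j}

open Finset Finsupp

theorem Finsupp.single_add_single_le_iff {ι M : Type*} [AddCommMonoid M] [PartialOrder M]
    [CanonicallyOrderedAdd M] {i j : ι} (hij : i ≠ j) {x y : M} {f : ι →₀ M} :
    single i x + single j y ≤ f ↔ x ≤ f i ∧ y ≤ f j := by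
  refine ⟨fun h => ⟨by simpa [hij.symm] using h i, by simpa [hij] using h j⟩,
    fun ⟨hi, hj⟩ t => ?_⟩
  rcases eq_or_ne t i with rfl | hti
  · simpa [hij] using hi
  rcases eq_or_ne t j with rfl | htj
  · simpa [hij.symm] using hj
  · simp [hti.symm, htj.symm]

theorem monomial_mem_pathIdeal_iff {K : Type*} [Field K] {n m : ℕ} (a : Fin n →₀ ℕ) :
    monomial a (1 : K) ∈ pathIdeal K n m ↔
      ∃ i j : Fin n, (j : ℕ) = i + 1 ∧ (i : ℕ) + 2 ≤ m ∧ 1 ≤ a i ∧ 1 ≤ a j := by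
  classical
  have hgen : {p : MvPolynomial (Fin n) K |
      ∃ i j : Fin n, (j : ℕ) = i + 1 ∧ (i : ℕ) + 2 ≤ m ∧ p = X i * X j} =
      (fun s => monomial s 1) '' {s | ∃ i j : Fin n, (j : ℕ) = i + 1 ∧ (i : ℕ) + 2 ≤ m ∧
        s = single i 1 + single j 1} := by
    ext p
    simp only [Set.mem_ofPred_eq, Set.mem_image]
    constructor
    · rintro ⟨i, j, hij, hm, rfl⟩
      exact ⟨_, ⟨i, j, hij, hm, rfl⟩, by simp [X, monomial_mul]⟩
    · rintro ⟨s, ⟨i, j, hij, hm, rfl⟩, rfl⟩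
      exact ⟨i, j, hij, hm, by simp [X, monomial_mul]⟩
  rw [pathIdeal, hgen, mem_ideal_span_monomial_image, support_monomial, if_neg one_ne_zero]
  simp only [Finset.mem_singleton, forall_eq, Set.mem_ofPred_eq]
  constructor
  · rintro ⟨_, ⟨i, j, hij, hm, rfl⟩, hle⟩
    exact ⟨i, j, hij, hm, (single_add_single_le_iff (by grind)).1 hle⟩
  · rintro ⟨i, j, hij, hm, hle⟩
    exact ⟨_, ⟨i, j, hij, hm, rfl⟩, (single_add_single_le_iff (by grind)).2 hle⟩

theorem monomial_dvd_prod_X_iff {σ R : Type*} [Fintype σ] [CommSemiring R] [Nontrivial R]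
    (a : σ →₀ ℕ) : monomial a (1 : R) ∣ ∏ i, X i ↔ ∀ i, a i ≤ 1 := by
  rw [show ∏ i, (X i : MvPolynomial σ R) = monomial (∑ i, single i 1) 1 from
    (monomial_sum_one _ _).symm, monomial_one_dvd_monomial_one, Finsupp.le_def,
    coe_univ_sum_single]

theorem Finsupp.embDomain_valEmbedding_apply {M : Type*} [Zero M] {n : ℕ} (a : Fin n →₀ M)
    (t : ℕ) : a.embDomain Fin.valEmbedding t = if h : t < n then a ⟨t, h⟩ else 0 := by
  split_ifs with h
  · exact embDomain_apply_self Fin.valEmbedding a ⟨t, h⟩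
  · exact embDomain_of_notMem_range _ _ _ (by simpa using h)

theorem Finsupp.sum_range_embDomain_valEmbedding {M : Type*} [AddCommMonoid M] {n : ℕ}
    (a : Fin n →₀ M) : ∑ t ∈ range n, a.embDomain Fin.valEmbedding t = ∑ j, a j := by
  rw [← Fin.sum_univ_eq_sum_range]
  exact Finset.sum_congr rfl fun j _ => embDomain_apply_self Fin.valEmbedding a j

theorem Finset.sum_range_add_two_shift {M : Type*} [AddCommMonoid M] (f : ℕ → M) (s m : ℕ) :
    ∑ t ∈ range (m + 2), f (s + t) = f s + f (s + 1) + ∑ t ∈ range m, f (s + 2 + t) := by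
  rw [add_comm m 2, sum_range_add, sum_range_succ, sum_range_one, add_zero]
  simp only [add_assoc]

theorem sum_range_three_mul_ite_mod_three_eq_one (m : ℕ) :
    ∑ t ∈ range (3 * m), (if t % 3 = 1 then 1 else 0) = m := by
  induction m with
  | zero => simp
  | succ m ih =>
    rw [show 3 * (m + 1) = 3 * m + 1 + 1 + 1 by ring, sum_range_succ, sum_range_succ,
      sum_range_succ, ih]
    grind

/-- Exponent vectors on `ℕ` of the squarefree monomials supported on an independent set of the
infinite path `0 - 1 - 2 - ⋯`. -/
def IsPathIndependent (b : ℕ → ℕ) : Prop := ∀ t, b t + b (t + 1) ≤ 1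

namespace IsPathIndependent

variable {b : ℕ → ℕ}

theorem mono {c : ℕ → ℕ} (hb : IsPathIndependent b) (hcb : ∀ t, c t ≤ b t) :
    IsPathIndependent c :=
  fun t => (add_le_add (hcb t) (hcb (t + 1))).trans (hb t)

theorem sum_range_le (hb : IsPathIndependent b) (s m : ℕ) :
    ∑ t ∈ range (2 * m + 1), b (s + t) ≤ m + 1 := by
  induction m generalizing s with
  | zero => simpa using (Nat.le_add_right _ _).trans (hb s)
  | succ m ih =>
    rw [show 2 * (m + 1) + 1 = 2 * m + 1 + 2 by ring, sum_range_add_two_shift]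
    linarith [ih (s + 2), hb s]

theorem apply_eq_of_sum_range_eq (hb : IsPathIndependent b) {s m : ℕ}
    (hsum : ∑ t ∈ range (2 * m + 1), b (s + t) = m + 1) {t : ℕ} (ht : t < 2 * m + 1) :
    b (s + t) = if t % 2 = 0 then 1 else 0 := by
  induction m generalizing s t with
  | zero =>
    obtain rfl : t = 0 := by omega
    simpa using hsum
  | succ m ih =>
    rw [show 2 * (m + 1) + 1 = 2 * m + 1 + 2 by ring, sum_range_add_two_shift] at hsum
    -- `b s + b (s + 1) ≤ 1`, so the tail is extremal too; its forced `b (s + 2) = 1` then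
    -- excludes `s + 1` and forces `s`.
    have htail : ∑ t ∈ range (2 * m + 1), b (s + 2 + t) = m + 1 := by
      linarith [hb.sum_range_le (s + 2) m, hb s]
    have hs2 : b (s + 2) = 1 := by simpa using ih htail (t := 0) (by omega)
    have hs1 : b (s + 1) + b (s + 2) ≤ 1 := hb (s + 1)
    rcases t with _ | _ | t
    · simp only [add_zero, Nat.zero_mod, if_true]
      omega
    · rw [zero_add, if_neg (by decide)]
      omega
    · rw [add_assoc t 1 1, add_comm t 2, ← add_assoc, ih htail (by omega), Nat.add_mod_left]

theorem apply_eq_of_one_le_apply_three_mul_add_one (hb : IsPathIndependent b) {m : ℕ}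
    (hm : ∀ i < m, 1 ≤ b (3 * i + 1)) {t : ℕ} (ht : t < 3 * m) :
    b t = if t % 3 = 1 then 1 else 0 := by
  obtain ⟨q, hq⟩ : ∃ q, t = 3 * q ∨ t = 3 * q + 1 ∨ t = 3 * q + 2 := ⟨t / 3, by omega⟩
  have hmid := hm q (by omega)
  have hleft := hb (3 * q)
  have hright : b (3 * q + 1) + b (3 * q + 2) ≤ 1 := hb (3 * q + 1)
  rcases hq with rfl | rfl | rfl <;> split_ifs <;> omega

theorem apply_eq_of_one_le_of_sum_range_eq (hb : IsPathIndependent b) {m r : ℕ}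
    (hm : ∀ i < m, 1 ≤ b (3 * i + 1))
    (hsum : ∑ t ∈ range (3 * m + (2 * r + 1)), b t = m + (r + 1)) {t : ℕ}
    (ht : t < 3 * m + (2 * r + 1)) :
    b t = if t < 3 * m then (if t % 3 = 1 then 1 else 0)
      else (if (t - 3 * m) % 2 = 0 then 1 else 0) := by
  have hhead : ∑ t ∈ range (3 * m), b t = m := by
    rw [Finset.sum_congr rfl fun t ht =>
      hb.apply_eq_of_one_le_apply_three_mul_add_one hm (mem_range.1 ht)]
    exact sum_range_three_mul_ite_mod_three_eq_one m
  rw [sum_range_add, hhead] at hsum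
  rcases lt_or_ge t (3 * m) with h | h
  · rw [if_pos h, hb.apply_eq_of_one_le_apply_three_mul_add_one hm h]
  · obtain ⟨u, rfl⟩ := Nat.exists_eq_add_of_le h
    rw [if_neg (by omega), hb.apply_eq_of_sum_range_eq (m := r) (by omega) (by omega),
      Nat.add_sub_cancel_left]

theorem embDomain_valEmbedding_of_le {n : ℕ} {a : Fin n →₀ ℕ} (hb : IsPathIndependent b)
    (ha : ∀ j : Fin n, a j ≤ b j) : IsPathIndependent (a.embDomain Fin.valEmbedding) :=
  hb.mono fun t => by
    rw [embDomain_valEmbedding_apply]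
    split_ifs with h
    exacts [ha ⟨t, h⟩, Nat.zero_le _]

end IsPathIndependent

theorem monomial_notMem_pathIdeal_and_dvd_prod_X_iff {K : Type*} [Field K] {n : ℕ}
    (a : Fin n →₀ ℕ) :
    (monomial a (1 : K) ∉ pathIdeal K n n ∧ monomial a (1 : K) ∣ ∏ i, X i) ↔
      IsPathIndependent (a.embDomain Fin.valEmbedding) := by
  rw [monomial_mem_pathIdeal_iff, monomial_dvd_prod_X_iff]
  constructor
  · rintro ⟨hI, hle⟩ t
    simp only [embDomain_valEmbedding_apply]
    split_ifs with ht ht'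
    · have hle₀ := hle ⟨t, ht⟩
      have hle₁ := hle ⟨t + 1, ht'⟩
      by_contra! h
      exact hI ⟨⟨t, ht⟩, ⟨t + 1, ht'⟩, rfl, by simp only; omega, by omega, by omega⟩
    · simpa using hle _
    · omega
    · simp
  · intro h
    refine ⟨fun ⟨i, j, hij, _, hi, hj⟩ => ?_, fun j => ?_⟩
    · have := h i
      simp only [embDomain_valEmbedding_apply, i.isLt, ← hij, j.isLt, dif_pos, Fin.eta] at this
      omega
    · have := h j
      simp only [embDomain_valEmbedding_apply, j.isLt, dif_pos, Fin.eta] at this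
      omega

/-- The exponent of `x_2 x_5 ⋯ x_{3m-1}` (in the paper's 1-indexed notation). -/
noncomputable def everyThird (n m : ℕ) (h : ∀ i : Fin m, 3 * (i : ℕ) + 1 < n) : Fin n →₀ ℕ :=
  ∑ i : Fin m, single ⟨3 * (i : ℕ) + 1, h i⟩ 1

section everyThird

variable {n m : ℕ} {h : ∀ i : Fin m, 3 * (i : ℕ) + 1 < n}

theorem sum_single_eq_everyThird :
    ∑ i : Fin m, single (⟨3 * (i : ℕ) + 1, h i⟩ : Fin n) 1 = everyThird n m h :=
  rfl

theorem everyThird_apply (j : Fin n) :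
    everyThird n m h j = if (j : ℕ) % 3 = 1 ∧ (j : ℕ) < 3 * m then 1 else 0 := by
  classical
  simp only [everyThird, Finsupp.finsetSum_apply, single_apply, Fin.ext_iff]
  split_ifs with hj
  · rw [Finset.sum_eq_single (⟨(j - 1) / 3, by omega⟩ : Fin m)]
    · simp only [if_pos (by omega : 3 * ((j - 1) / 3) + 1 = (j : ℕ))]
    · intro i _ hi
      rw [if_neg]
      simp only [ne_eq, Fin.ext_iff] at hi
      omega
    · simp
  · exact Finset.sum_eq_zero fun i _ => if_neg (by omega)

theorem sum_everyThird : ∑ j, everyThird n m h j = m := by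
  simp [everyThird, Finsupp.finsetSum_apply, Finset.sum_comm (γ := Fin n)]

theorem isPathIndependent_everyThird :
    IsPathIndependent ((everyThird n m h).embDomain Fin.valEmbedding) :=
  IsPathIndependent.embDomain_valEmbedding_of_le
    (b := fun t => if t % 3 = 1 ∧ t < 3 * m then 1 else 0)
    (fun t => by dsimp only; split_ifs <;> omega) fun j => (everyThird_apply j).le

theorem one_le_embDomain_of_everyThird_le {a : Fin n →₀ ℕ} (ha : everyThird n m h ≤ a)
    {i : ℕ} (hi : i < m) : 1 ≤ a.embDomain Fin.valEmbedding (3 * i + 1) := by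
  have := ha ⟨3 * i + 1, h ⟨i, hi⟩⟩
  rw [everyThird_apply, if_pos (by simp only; omega)] at this
  rwa [embDomain_valEmbedding_apply, dif_pos (h ⟨i, hi⟩)]

end everyThird

/-- Let `k ≥ 2`, `n = 3k + 1` and `I = I(P_n)` in `S = K[x_1, …, x_n]`. In the
characteristic poset `P = {a ∈ ℕⁿ : x ^ a ∉ I and x ^ a ∣ x_1 ⋯ x_n}` of `S/I`,
with `α = Σ_{i=1}^{k-2} e_{3i-1}` (written 0-indexed below), one has
`P_{k+2, α} = {α + e_{3k-5} + e_{3k-3} + e_{3k-1} + e_{3k+1}}`; moreover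
`A = Σ_{i=1}^{k-1} e_{3i-1}` belongs to `P` and `|A| = k - 1`. -/
theorem charPoset_path_three_mul_add_one {K : Type*} [Field K] (k n : ℕ) (hk : 2 ≤ k)
    (hn : n = 3 * k + 1) :
    ({a : Fin n →₀ ℕ |
        ((monomial a (1 : K)) ∉ pathIdeal K n n ∧ (monomial a (1 : K)) ∣ ∏ i : Fin n, X i) ∧
        (∑ j : Fin n, a j) = k + 2 ∧
        (monomial (∑ i : Fin (k - 2), Finsupp.single (⟨3 * (i : ℕ) + 1, by omega⟩ : Fin n) 1)
          (1 : K)) ∣ (monomial a (1 : K))} =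
      {(∑ i : Fin (k - 2), Finsupp.single (⟨3 * (i : ℕ) + 1, by omega⟩ : Fin n) 1) +
        Finsupp.single (⟨3 * k - 6, by omega⟩ : Fin n) 1 +
        Finsupp.single (⟨3 * k - 4, by omega⟩ : Fin n) 1 +
        Finsupp.single (⟨3 * k - 2, by omega⟩ : Fin n) 1 +
        Finsupp.single (⟨3 * k, by omega⟩ : Fin n) 1}) ∧
    ((monomial (∑ i : Fin (k - 1), Finsupp.single (⟨3 * (i : ℕ) + 1, by omega⟩ : Fin n) 1)
        (1 : K)) ∉ pathIdeal K n n ∧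
      (monomial (∑ i : Fin (k - 1), Finsupp.single (⟨3 * (i : ℕ) + 1, by omega⟩ : Fin n) 1)
        (1 : K)) ∣ ∏ i : Fin n, X i) ∧
    (∑ j : Fin n, (∑ i : Fin (k - 1), Finsupp.single (⟨3 * (i : ℕ) + 1, by omega⟩ : Fin n) 1) j)
      = k - 1 := by
  subst hn
  simp only [sum_single_eq_everyThird, monomial_notMem_pathIdeal_and_dvd_prod_X_iff,
    monomial_one_dvd_monomial_one]
  refine ⟨Set.eq_singleton_iff_unique_mem.2 ⟨⟨?_, ?_, ?_⟩, ?_⟩, isPathIndependent_everyThird,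
    sum_everyThird⟩
  · refine IsPathIndependent.embDomain_valEmbedding_of_le (b := fun t =>
      if (t % 3 = 1 ∧ t < 3 * (k - 2)) ∨ t = 3 * k - 6 ∨ t = 3 * k - 4 ∨ t = 3 * k - 2 ∨ t = 3 * k
      then 1 else 0) (fun t => by dsimp only; split_ifs <;> omega) fun j => ?_
    simp only [Finsupp.add_apply, everyThird_apply, single_apply, Fin.ext_iff]
    split_ifs <;> omega
  · simp only [Finsupp.add_apply, Finset.sum_add_distrib, sum_everyThird, univ_sum_single_apply]
    omega
  · exact le_add_right (le_add_right (le_add_right le_self_add))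
  · rintro a ⟨ha, hsum, hα⟩
    have hsum' : ∑ t ∈ range (3 * (k - 2) + (2 * 3 + 1)), a.embDomain Fin.valEmbedding t =
        k - 2 + (3 + 1) := by
      rw [show 3 * (k - 2) + (2 * 3 + 1) = 3 * k + 1 by omega, sum_range_embDomain_valEmbedding,
        hsum]
      omega
    ext j
    have hj : (j : ℕ) < 3 * (k - 2) + (2 * 3 + 1) := by omega
    rw [← embDomain_apply_self Fin.valEmbedding a j, Fin.valEmbedding_apply,
      ha.apply_eq_of_one_le_of_sum_range_eq
        (fun i hi => one_le_embDomain_of_everyThird_le hα hi) hsum' hj]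
    simp only [Finsupp.add_apply, everyThird_apply, single_apply, Fin.ext_iff]
    split_ifs <;> omega
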